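/- Let Γ be a countable discrete group acting on a Hilbert space H via a dual integrable representation T, and let ψ ∈ H. Then {T(γ)ψ}_{γ∈Γ} is an orthonormal basis for the cyclic space ⟨ψ⟩ if and only if [ψ,ψ] = 1 (the identity operator on ℓ²(Γ)). -/

import Mathlib

noncomputable section
open scoped ENNReal ComplexConjugate

/-- The pairing `⟪u, f⟫ = ∑ conj (u γ) * f γ` of a finitely supported vector against an
arbitrary function; this is the inner product of `ℓ²(Γ)` extended to pointwise-defined
vectors. -/
noncomputable def pairF {Γ : Type*} (u : Γ →₀ ℂ) (f : Γ → ℂ) : ℂ :=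
  u.sum fun γ c => conj c * f γ

/-- Elements of the noncommutative `Lᵖ` spaces over `vNa(Γ)` are densely defined operators
on `ℓ²(Γ)`, defined (weakly) on the dense subspace of finitely supported vectors, which are
affiliated to `vNa(Γ)`, i.e. commute with the right regular representation
`ρ(γ) δ_{γ'} = δ_{γ' γ}`. -/
def Affiliated {Γ : Type*} [Group Γ] (F : (Γ →₀ ℂ) →ₗ[ℂ] (Γ → ℂ)) : Prop :=
  ∀ (γ : Γ) (u : Γ →₀ ℂ) (x : Γ),
    F (Finsupp.mapDomain (fun y => y * γ) u) x = F u (x * γ⁻¹)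

/-- Membership in `L¹(vNa(Γ))`: since `L¹ = L² · L²`, an affiliated operator is in `L¹`
iff its Fourier coefficient function `γ ↦ (F δₑ)(γ)` is the convolution of two square
summable kernels. -/
def MemL1 {Γ : Type*} [Group Γ] (F : (Γ →₀ ℂ) →ₗ[ℂ] (Γ → ℂ)) : Prop :=
  ∃ g h : Γ → ℂ, Memℓp g 2 ∧ Memℓp h 2 ∧
    ∀ γ : Γ, F (Finsupp.single 1 1) γ = ∑' y, g y * h (y⁻¹ * γ)

/-- Let `Γ` act on `H` via a dual integrable representation `T` and let
`ψ ∈ H`.  Then `{T(γ)ψ}_{γ ∈ Γ}` is an orthonormal basis of the cyclic space `⟨ψ⟩` (i.e.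
an orthonormal family, completeness in `⟨ψ⟩` being automatic) if and only if `[ψ,ψ] = 1`,
the identity operator on `ℓ²(Γ)`. -/
theorem orthonormal_basis_iff_bracket_one {Γ : Type*} [Group Γ] [Countable Γ]
    {H : Type*} [NormedAddCommGroup H] [InnerProductSpace ℂ H] [CompleteSpace H]
    (T : Γ →* (H ≃ₗᵢ[ℂ] H))
    (br : H → H → ((Γ →₀ ℂ) →ₗ[ℂ] (Γ → ℂ)))
    (haff : ∀ φ ψ : H, Affiliated (br φ ψ))
    (hL1 : ∀ φ ψ : H, MemL1 (br φ ψ))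
    (hdual : ∀ (φ ψ : H) (γ : Γ), (inner ℂ ((T γ) ψ) φ : ℂ) = br φ ψ (Finsupp.single 1 1) γ) (ψ : H) :
    Orthonormal ℂ (fun γ : Γ => ((T γ) ψ : H))
      ↔ ∀ (u : Γ →₀ ℂ) (x : Γ), br ψ ψ u x = u x := by
  classical

  have key : ∀ i j : Γ, (inner ℂ ((T i) ψ) ((T j) ψ) : ℂ) = inner ℂ ((T (j⁻¹ * i)) ψ) ψ := by
    intro i j
    have h1 := (T j).inner_map_map ((T (j⁻¹ * i)) ψ) ψ
    rw [← h1]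
    congr 1
    have h2 : (T j) ((T (j⁻¹ * i)) ψ) = (T (j * (j⁻¹ * i))) ψ := by
      simp [map_mul, LinearIsometryEquiv.coe_mul]
    rw [h2, mul_inv_cancel_left]
  rw [orthonormal_iff_ite]
  constructor
  · intro hON u x
    have hdelta : ∀ γ : Γ, br ψ ψ (Finsupp.single 1 1) γ = if γ = 1 then 1 else 0 := by
      intro γ
      have := hON γ 1
      rw [key γ 1, inv_one, one_mul, hdual ψ ψ γ] at this
      exact this
    have hsingle : ∀ (γ x : Γ), br ψ ψ (Finsupp.single γ 1) x = if x = γ then 1 else 0 := by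
      intro γ x
      have := haff ψ ψ γ (Finsupp.single 1 1) x
      rw [Finsupp.mapDomain_single, one_mul] at this
      rw [this, hdelta, mul_inv_eq_one]
    induction u using Finsupp.induction_linear with
    | zero => simp
    | add f g hf hg => rw [map_add]; simp [hf, hg]
    | single a b =>
      have : Finsupp.single a b = b • Finsupp.single a (1 : ℂ) := by
        rw [Finsupp.smul_single, smul_eq_mul, mul_one]
      rw [this, map_smul]
      simp only [Pi.smul_apply, smul_eq_mul, hsingle, Finsupp.smul_single, smul_eq_mul,
        mul_one, Finsupp.single_apply]
      by_cases h : x = a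
      · simp [h]
      · simp [h, Ne.symm h]
  · intro hid i j
    rw [key i j, hdual ψ ψ, hid, Finsupp.single_apply]
    by_cases h : i = j
    · simp [h]
    · have : ¬ (1 : Γ) = j⁻¹ * i := by
        rw [eq_comm, inv_mul_eq_one]; exact fun e => h e.symm
      simp [h, this]
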